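/- Let A be an n×n complex matrix such that A^k is nonnegative and irreducible with (A^k)_{ii} > 0 for some index i and some k ≥ 1. Then A has a unique eigenvalue of maximum modulus, i.e. |λ₁(A)| > |λ₂(A)| where eigenvalues are ordered by decreasing modulus. -/

import Mathlib

open ComplexOrder

open Matrix Complex

noncomputable def specRad {n : ℕ} (A : Matrix (Fin n) (Fin n) ℂ) : ℝ :=
  sSup ((fun z : ℂ => ‖z‖) '' spectrum ℂ A)

def MatIrred {n : ℕ} (A : Matrix (Fin n) (Fin n) ℂ) : Prop :=
  ∀ S : Set (Fin n), S.Nonempty → S ≠ Set.univ → ∃ i ∈ S, ∃ j ∉ S, A i j ≠ 0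

/-!
Walks in the graph of the irreducible matrix `A ^ k` can all be padded to one common length by
the loop at a positive diagonal entry, so some power `P = A ^ K` is entrywise positive.

For a positive matrix `P` with spectral radius `ρ`, let `P v = c v` with `‖c‖ = ρ`. Then
`P |v| ≥ ρ |v|`, and equality must hold: otherwise `P (P |v|) ≥ (ρ + ε) P |v|` for some
`ε > 0`, so the diagonal of `P ^ t` grows like `(ρ + ε) ^ t`, contradicting
`tr (P ^ t) ≤ n ρ ^ t`. Hence `|v|` is a positive eigenvector, the triangle inequality in
`P v = c v` is an equality, which forces `c = ρ`, and no eigenvector for `ρ` has a zero entry,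
so the `ρ`-eigenspace is a line.

If `λ` and `μ` are eigenvalues of `A` of maximal modulus, then `λ ^ K = μ ^ K = ρ` and their
eigenvectors lie on this line, so `λ = μ`.
-/

open Filter Topology ComplexConjugate

theorem le_of_forall_mul_pow_le_mul_pow {C D s r : ℝ} (hC : 0 < C) (hr : 0 ≤ r)
    (h : ∀ t : ℕ, C * s ^ t ≤ D * r ^ t) : s ≤ r := by
  by_contra! hrs
  have hs : 0 < s := hr.trans_lt hrs
  have hlim : Tendsto (fun t : ℕ => D * (r / s) ^ t) atTop (𝓝 0) := by
    simpa using (tendsto_pow_atTop_nhds_zero_of_lt_one (div_nonneg hr hs.le)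
      ((div_lt_one hs).2 hrs)).const_mul D
  have : C ≤ 0 := ge_of_tendsto' hlim fun t => by
    rw [div_pow, mul_div_assoc', le_div_iff₀ (pow_pos hs t)]
    exact h t
  linarith

theorem exists_pos_forall_add_mul_lt {ι : Type*} [Finite ι] {a b c : ι → ℝ}
    (h : ∀ i, a i < c i) : ∃ ε > 0, ∀ i, a i + ε * b i < c i := by
  have hev : ∀ᶠ ε in 𝓝 (0 : ℝ), ∀ i, a i + ε * b i < c i :=
    eventually_all.2 fun i => ContinuousAt.eventually_lt (by fun_prop) (by fun_prop)
      (by simpa using h i)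
  obtain ⟨ε, hε, hε0⟩ := ((hev.filter_mono nhdsWithin_le_nhds).and
    (self_mem_nhdsWithin (s := Set.Ioi 0))).exists
  exact ⟨ε, hε0, hε⟩

theorem Complex.norm_sum_mul_eq_norm_mul_sum_of_norm_sum_eq {ι : Type*} [Fintype ι]
    {z : ι → ℂ} (h : ‖∑ i, z i‖ = ∑ i, ‖z i‖) (j : ι) :
    (‖∑ i, z i‖ : ℂ) * z j = ‖z j‖ * ∑ i, z i := by
  set S := ∑ i, z i
  rcases eq_or_ne S 0 with hS | hS
  · simp [hS]
  have hre : ∀ i, (z i * conj S).re = ‖z i * conj S‖ := by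
    have hsum : ∑ i, (z i * conj S).re = ∑ i, ‖z i * conj S‖ := by
      rw [← re_sum, ← Finset.sum_mul, mul_conj']
      simp only [norm_mul, norm_conj, ← Finset.sum_mul, ← h]
      norm_cast
      exact sq _
    exact fun i => (Finset.sum_eq_sum_iff_of_le fun i _ => re_le_norm _).1 hsum i
      (Finset.mem_univ i)
  have hj : z j * conj S = ‖z j‖ * ‖S‖ := by
    rw [eq_re_of_ofReal_le (r := 0) (z := z j * conj S) (by simpa using re_eq_norm.1 (hre j)),
      hre j]
    simp
  have hS' : (‖S‖ : ℂ) ≠ 0 := by simpa using hS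
  refine mul_left_cancel₀ hS' ?_
  linear_combination S * hj - z j * mul_conj' S

namespace Matrix

variable {ι α : Type*} [Fintype ι]

theorem exists_mulVec_eq_smul_of_mem_spectrum [DecidableEq ι] {K : Type*} [Field K]
    {A : Matrix ι ι K} {c : K} (h : c ∈ spectrum K A) : ∃ v ≠ 0, A *ᵥ v = c • v := by
  rw [← spectrum_toLin', ← Module.End.hasEigenvalue_iff_mem_spectrum] at h
  obtain ⟨v, hv⟩ := h.exists_hasEigenvector
  exact ⟨v, hv.2, by simpa using hv.apply_eq_smul⟩

variable [CommSemiring α] {B : Matrix ι ι α}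

theorem pow_mulVec_eq_pow_smul [DecidableEq ι] {c : α} {v : ι → α} (h : B *ᵥ v = c • v)
    (t : ℕ) : (B ^ t) *ᵥ v = c ^ t • v := by
  induction t with
  | zero => simp
  | succ t ih => rw [pow_succ, ← mulVec_mulVec, h, mulVec_smul, ih, smul_smul, pow_succ']

section OrderedSemiring

variable [PartialOrder α] [IsOrderedRing α]

theorem pow_apply_mul_pow_apply_le [DecidableEq ι] (hB : ∀ i j, 0 ≤ B i j) (a b : ℕ)
    (i l j : ι) : (B ^ a) i l * (B ^ b) l j ≤ (B ^ (a + b)) i j := by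
  rw [pow_add, mul_apply]
  exact Finset.single_le_sum (f := fun l => (B ^ a) i l * (B ^ b) l j)
    (fun l _ => mul_nonneg (pow_apply_nonneg hB a i l) (pow_apply_nonneg hB b l j))
    (Finset.mem_univ l)

theorem mulVec_mono_of_nonneg (hB : ∀ i j, 0 ≤ B i j) {x y : ι → α} (h : x ≤ y) :
    B *ᵥ x ≤ B *ᵥ y := fun i =>
  Finset.sum_le_sum fun j _ => mul_le_mul_of_nonneg_left (h j) (hB i j)

theorem pow_smul_le_pow_mulVec [DecidableEq ι] (hB : ∀ i j, 0 ≤ B i j) {s : α} (hs : 0 ≤ s)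
    {y : ι → α} (h : s • y ≤ B *ᵥ y) (t : ℕ) : s ^ t • y ≤ (B ^ t) *ᵥ y := by
  induction t with
  | zero => simp
  | succ t ih =>
    calc s ^ (t + 1) • y = s ^ t • (s • y) := by rw [pow_succ, mul_smul]
      _ ≤ s ^ t • (B *ᵥ y) := smul_le_smul_of_nonneg_left h (pow_nonneg hs t)
      _ = B *ᵥ (s ^ t • y) := by rw [mulVec_smul]
      _ ≤ B *ᵥ ((B ^ t) *ᵥ y) := mulVec_mono_of_nonneg hB ih
      _ = (B ^ (t + 1)) *ᵥ y := by rw [mulVec_mulVec, pow_succ']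

end OrderedSemiring

variable [PartialOrder α] [IsStrictOrderedRing α]

theorem pow_apply_self_pos [DecidableEq ι] (hB : ∀ i j, 0 ≤ B i j) {i : ι} (hi : 0 < B i i)
    (t : ℕ) : 0 < (B ^ t) i i := by
  induction t with
  | zero => simp
  | succ t ih =>
    exact (mul_pos ih (by rwa [pow_one])).trans_le (pow_apply_mul_pow_apply_le hB t 1 i i i)

theorem exists_pow_pos_of_reachable [DecidableEq ι] (hB : ∀ i j, 0 ≤ B i j)
    (hreach : ∀ i j, ∃ t, 0 < (B ^ t) i j) {i₀ : ι} (hi₀ : 0 < B i₀ i₀) :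
    ∃ m, 0 < m ∧ ∀ i j, 0 < (B ^ m) i j := by
  choose p hp using fun i => hreach i i₀
  choose q hq using fun j => hreach i₀ j
  let P := Finset.univ.sup p
  let Q := Finset.univ.sup q
  refine ⟨P + Q + 1, by omega, fun i j => ?_⟩
  have hpi : p i ≤ P := Finset.le_sup (Finset.mem_univ i)
  have hqj : q j ≤ Q := Finset.le_sup (Finset.mem_univ j)
  obtain ⟨d, hd⟩ : ∃ d, P + Q + 1 = p i + d + q j := ⟨P + Q + 1 - p i - q j, by omega⟩
  rw [hd]
  calc 0 < (B ^ p i) i i₀ * (B ^ d) i₀ i₀ * (B ^ q j) i₀ j :=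
        mul_pos (mul_pos (hp i) (pow_apply_self_pos hB hi₀ d)) (hq j)
    _ ≤ (B ^ (p i + d)) i i₀ * (B ^ q j) i₀ j :=
        mul_le_mul_of_nonneg_right (pow_apply_mul_pow_apply_le hB _ _ _ _ _)
          (pow_apply_nonneg hB _ _ _)
    _ ≤ _ := pow_apply_mul_pow_apply_le hB _ _ _ _ _

theorem mulVec_pos_of_pos (hB : ∀ i j, 0 < B i j) {y : ι → α} (hy : 0 ≤ y) (hy0 : y ≠ 0)
    (i : ι) : 0 < (B *ᵥ y) i := by
  obtain ⟨j, hj⟩ := Function.ne_iff.1 hy0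
  exact Finset.sum_pos' (fun l _ => mul_nonneg (hB i l).le (hy l))
    ⟨j, Finset.mem_univ j, mul_pos (hB i j) ((hy j).lt_of_ne' hj)⟩

end Matrix

theorem MatIrred.exists_pow_apply_pos {n : ℕ} {B : Matrix (Fin n) (Fin n) ℂ}
    (hB : ∀ i j, 0 ≤ B i j) (h : MatIrred B) (i j : Fin n) : ∃ t, 0 < (B ^ t) i j := by
  by_contra hj
  obtain ⟨a, ⟨t, ht⟩, b, hb, hab⟩ := h {l | ∃ t, 0 < (B ^ t) i l} ⟨i, 0, by simp⟩
    fun hS => hj (show j ∈ {l | ∃ t, 0 < (B ^ t) i l} from hS ▸ Set.mem_univ j)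
  exact hb ⟨t + 1, (mul_pos ht ((hB a b).lt_of_ne' hab)).trans_le
    (by simpa using pow_apply_mul_pow_apply_le hB t 1 i a b)⟩

section SpectralRadius

variable {n : ℕ}

theorem norm_le_specRad {M : Matrix (Fin n) (Fin n) ℂ} {c : ℂ} (hc : c ∈ spectrum ℂ M) :
    ‖c‖ ≤ specRad M :=
  le_csSup (M.finite_spectrum.image _).bddAbove (Set.mem_image_of_mem _ hc)

theorem specRad_nonneg (M : Matrix (Fin n) (Fin n) ℂ) : 0 ≤ specRad M :=
  Real.sSup_nonneg (by rintro _ ⟨c, -, rfl⟩; exact norm_nonneg c)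

theorem exists_norm_eq_specRad (hn : 0 < n) (M : Matrix (Fin n) (Fin n) ℂ) :
    ∃ c ∈ spectrum ℂ M, ‖c‖ = specRad M :=
  have : Nonempty (Fin n) := ⟨⟨0, hn⟩⟩
  ((spectrum.nonempty_of_isAlgClosed_of_finiteDimensional ℂ M).image _).csSup_mem
    (M.finite_spectrum.image _)

theorem norm_le_specRad_pow {M : Matrix (Fin n) (Fin n) ℂ} {t : ℕ} (ht : 0 < t) {c : ℂ}
    (hc : c ∈ spectrum ℂ (M ^ t)) : ‖c‖ ≤ specRad M ^ t := by
  rw [spectrum.map_pow_of_pos M ht] at hc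
  obtain ⟨e, he, rfl⟩ := hc
  rw [norm_pow]
  exact pow_le_pow_left₀ (norm_nonneg e) (norm_le_specRad he) t

theorem specRad_pow (hn : 0 < n) (M : Matrix (Fin n) (Fin n) ℂ) {K : ℕ} (hK : 0 < K) :
    specRad (M ^ K) = specRad M ^ K := by
  obtain ⟨c, hc, hcM⟩ := exists_norm_eq_specRad hn M
  refine IsGreatest.csSup_eq ⟨⟨c ^ K, spectrum.pow_mem_pow M K hc, by simp [hcM]⟩, ?_⟩
  rintro _ ⟨d, hd, rfl⟩
  exact norm_le_specRad_pow hK hd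

theorem norm_trace_pow_le (M : Matrix (Fin n) (Fin n) ℂ) {t : ℕ} (ht : 0 < t) :
    ‖(M ^ t).trace‖ ≤ n * specRad M ^ t := by
  rw [trace_eq_sum_roots_charpoly]
  have hroots : ∀ x ∈ (M ^ t).charpoly.roots.map (‖·‖), x ≤ specRad M ^ t := by
    rintro _ hx
    obtain ⟨c, hc, rfl⟩ := Multiset.mem_map.1 hx
    exact norm_le_specRad_pow ht
      (mem_spectrum_iff_isRoot_charpoly.2 (Polynomial.isRoot_of_mem_roots hc))
  have hcard : Multiset.card (M ^ t).charpoly.roots ≤ n := by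
    simpa [charpoly_natDegree_eq_dim] using (M ^ t).charpoly.card_roots'
  calc ‖(M ^ t).charpoly.roots.sum‖ ≤ ((M ^ t).charpoly.roots.map (‖·‖)).sum :=
        norm_multiset_sum_le _
    _ ≤ Multiset.card (M ^ t).charpoly.roots • specRad M ^ t := by
        simpa using Multiset.sum_le_card_nsmul _ _ hroots
    _ ≤ n * specRad M ^ t := by
        rw [nsmul_eq_mul]
        exact mul_le_mul_of_nonneg_right (by exact_mod_cast hcard)
          (pow_nonneg (specRad_nonneg M) t)

end SpectralRadius

section Perron

variable {n : ℕ} {R : Matrix (Fin n) (Fin n) ℝ}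

theorem trace_pow_le_specRad_pow (R : Matrix (Fin n) (Fin n) ℝ) {t : ℕ} (ht : 0 < t) :
    (R ^ t).trace ≤ n * specRad (R.map ofReal) ^ t := by
  have h := norm_trace_pow_le (R.map ofRealHom) ht
  rw [← Matrix.map_pow] at h
  have htrace : ((R ^ t).map ofRealHom).trace = ((R ^ t).trace : ℂ) := by simp [Matrix.trace]
  simp only [htrace, norm_real, Real.norm_eq_abs] at h
  exact (le_abs_self _).trans h

theorem le_specRad_of_smul_le_mulVec (hR : ∀ i j, 0 < R i j) {y : Fin n → ℝ} {i₀ : Fin n}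
    (hi₀ : 0 < y i₀) {s : ℝ} (hs : s • y ≤ R *ᵥ y) :
    s ≤ specRad (R.map ofReal) := by
  rcases le_or_gt s 0 with hs0 | hs0
  · exact hs0.trans (specRad_nonneg _)
  have hR0 : ∀ i j, 0 ≤ R i j := fun i j => (hR i j).le
  obtain ⟨κ, hκ, hκy⟩ : ∃ κ > 0, ∀ j, 0 + κ * y j < R j i₀ :=
    exists_pos_forall_add_mul_lt fun j => by simpa using hR j i₀
  refine le_of_forall_mul_pow_le_mul_pow (C := κ * y i₀) (D := n * specRad (R.map ofReal))
    (mul_pos hκ hi₀) (specRad_nonneg _) fun t => ?_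
  calc κ * y i₀ * s ^ t = κ * (s ^ t • y) i₀ := by simp; ring
    _ ≤ κ * ((R ^ t) *ᵥ y) i₀ :=
        mul_le_mul_of_nonneg_left (pow_smul_le_pow_mulVec hR0 hs0.le hs t i₀) hκ.le
    _ = ∑ j, (R ^ t) i₀ j * (κ * y j) := by
        simp only [mulVec, dotProduct, Finset.mul_sum]
        exact Finset.sum_congr rfl fun j _ => by ring
    _ ≤ ∑ j, (R ^ t) i₀ j * R j i₀ := Finset.sum_le_sum fun j _ =>
        mul_le_mul_of_nonneg_left (by simpa using (hκy j).le) (pow_apply_nonneg hR0 t i₀ j)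
    _ = (R ^ (t + 1)) i₀ i₀ := by rw [pow_succ, mul_apply]
    _ ≤ (R ^ (t + 1)).trace := Finset.single_le_sum (f := fun i => (R ^ (t + 1)) i i)
        (fun i _ => pow_apply_nonneg hR0 _ i i) (Finset.mem_univ i₀)
    _ ≤ n * specRad (R.map ofReal) ^ (t + 1) := trace_pow_le_specRad_pow R t.succ_pos
    _ = n * specRad (R.map ofReal) * specRad (R.map ofReal) ^ t := by ring

variable {c : ℂ} {v : Fin n → ℂ}

theorem mulVec_norm_eq_specRad_smul (hR : ∀ i j, 0 < R i j) (hv0 : v ≠ 0)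
    (hv : R.map ofReal *ᵥ v = c • v) (hc : ‖c‖ = specRad (R.map ofReal)) :
    R *ᵥ (‖v ·‖) = specRad (R.map ofReal) • (‖v ·‖) := by
  set ρ := specRad (R.map ofReal)
  set u : Fin n → ℝ := (‖v ·‖)
  have hu : 0 ≤ u := fun j => norm_nonneg (v j)
  have hu0 : u ≠ 0 := fun h => hv0 (funext fun j => norm_eq_zero.1 (congrFun h j))
  have hsub : ρ • u ≤ R *ᵥ u := fun i =>
    calc ρ * u i = ‖(R.map ofReal *ᵥ v) i‖ := by simp [hv, u, hc]
      _ = ‖∑ j, (R i j : ℂ) * v j‖ := rfl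
      _ ≤ ∑ j, ‖(R i j : ℂ) * v j‖ := norm_sum_le _ _
      _ = (R *ᵥ u) i := by simp [mulVec, dotProduct, u, abs_of_pos (hR _ _)]
  by_contra hne
  have hgrow : ∀ i, ρ * (R *ᵥ u) i < (R *ᵥ (R *ᵥ u)) i := fun i => by
    simpa [mulVec_sub, mulVec_smul, sub_pos] using
      mulVec_pos_of_pos hR (sub_nonneg.2 hsub) (sub_ne_zero.2 hne) i
  obtain ⟨ε, hε, hεgrow⟩ := exists_pos_forall_add_mul_lt (b := R *ᵥ u) hgrow
  obtain ⟨i, -⟩ := Function.ne_iff.1 hv0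
  have := le_specRad_of_smul_le_mulVec hR (mulVec_pos_of_pos hR hu hu0 i) (s := ρ + ε)
    fun j => by simpa [add_mul] using (hεgrow j).le
  linarith

theorem norm_pos_of_norm_eq_specRad (hR : ∀ i j, 0 < R i j) (hv0 : v ≠ 0)
    (hv : R.map ofReal *ᵥ v = c • v) (hc : ‖c‖ = specRad (R.map ofReal))
    (i : Fin n) : 0 < ‖v i‖ := by
  have hu0 : (‖v ·‖) ≠ 0 := fun h => hv0 (funext fun j => norm_eq_zero.1 (congrFun h j))
  have := mulVec_pos_of_pos hR (fun j => norm_nonneg (v j)) hu0 i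
  rw [mulVec_norm_eq_specRad_smul hR hv0 hv hc] at this
  exact pos_of_mul_pos_right this (specRad_nonneg _)

theorem eq_specRad_of_norm_eq_specRad (hR : ∀ i j, 0 < R i j) (hv0 : v ≠ 0)
    (hv : R.map ofReal *ᵥ v = c • v) (hc : ‖c‖ = specRad (R.map ofReal)) :
    c = specRad (R.map ofReal) := by
  obtain ⟨i, -⟩ := Function.ne_iff.1 hv0
  have hvi := norm_pos_of_norm_eq_specRad hR hv0 hv hc i
  have hrow : ∑ j, (R i j : ℂ) * v j = c * v i := congrFun hv i
  have hsum : ‖∑ j, (R i j : ℂ) * v j‖ = ∑ j, ‖(R i j : ℂ) * v j‖ := by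
    have := congrFun (mulVec_norm_eq_specRad_smul hR hv0 hv hc) i
    simp only [mulVec, dotProduct, Pi.smul_apply, smul_eq_mul] at this
    simp [hrow, hc, this, abs_of_pos (hR _ _)]
  have key := Complex.norm_sum_mul_eq_norm_mul_sum_of_norm_sum_eq hsum i
  rw [hrow, norm_mul, hc, norm_mul, norm_real, Real.norm_of_nonneg (hR i i).le] at key
  have hne : ((R i i * ‖v i‖ : ℝ) : ℂ) * v i ≠ 0 := by
    simp [(hR i i).ne', norm_pos_iff.1 hvi]
  refine (mul_left_cancel₀ hne ?_).symm
  push_cast at key ⊢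
  linear_combination key

theorem exists_eq_smul_of_norm_eq_specRad (hR : ∀ i j, 0 < R i j)
    (hc : ‖c‖ = specRad (R.map ofReal)) {v w : Fin n → ℂ} (hv0 : v ≠ 0)
    (hv : R.map ofReal *ᵥ v = c • v) (hw : R.map ofReal *ᵥ w = c • w) :
    ∃ a : ℂ, w = a • v := by
  obtain ⟨i, -⟩ := Function.ne_iff.1 hv0
  have hvi : v i ≠ 0 := norm_pos_iff.1 (norm_pos_of_norm_eq_specRad hR hv0 hv hc i)
  refine ⟨w i / v i, ?_⟩
  by_contra hne
  have hx : R.map ofReal *ᵥ (w - (w i / v i) • v) = c • (w - (w i / v i) • v) := by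
    rw [mulVec_sub, mulVec_smul, hv, hw, smul_sub, smul_comm]
  have := norm_pos_of_norm_eq_specRad hR (sub_ne_zero.2 hne) hx hc i
  simp [hvi] at this

end Perron

theorem eq_of_norm_eq_specRad {n : ℕ} (hn : 0 < n) {A : Matrix (Fin n) (Fin n) ℂ}
    {R : Matrix (Fin n) (Fin n) ℝ} (hR : ∀ i j, 0 < R i j) {K : ℕ} (hK : 0 < K)
    (hAK : A ^ K = R.map ofReal) {lam mu : ℂ} (hlam : lam ∈ spectrum ℂ A)
    (hmu : mu ∈ spectrum ℂ A) (hlamρ : ‖lam‖ = specRad A) (hmuρ : ‖mu‖ = specRad A) :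
    lam = mu := by
  have hpow (z : ℂ) (hz : ‖z‖ = specRad A) : ‖z ^ K‖ = specRad (R.map ofReal) := by
    rw [← hAK, specRad_pow hn A hK, norm_pow, hz]
  obtain ⟨v, hv0, hv⟩ := exists_mulVec_eq_smul_of_mem_spectrum hlam
  obtain ⟨w, hw0, hw⟩ := exists_mulVec_eq_smul_of_mem_spectrum hmu
  have hvK := hAK ▸ pow_mulVec_eq_pow_smul hv K
  have hwK := hAK ▸ pow_mulVec_eq_pow_smul hw K
  have hlamK := eq_specRad_of_norm_eq_specRad hR hv0 hvK (hpow lam hlamρ)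
  have hmuK := eq_specRad_of_norm_eq_specRad hR hw0 hwK (hpow mu hmuρ)
  obtain ⟨a, rfl⟩ := exists_eq_smul_of_norm_eq_specRad hR (hpow lam hlamρ) hv0 hvK
    (by rwa [hlamK, ← hmuK])
  refine smul_left_injective ℂ hw0 (show lam • a • v = mu • a • v from ?_)
  rw [← hw, mulVec_smul, hv, smul_comm]

theorem stmt_4 {n : ℕ} (hn : 0 < n) (A : Matrix (Fin n) (Fin n) ℂ) (k : ℕ) (hk : 1 ≤ k)
    (hnonneg : ∀ i j, 0 ≤ (A ^ k) i j) (hirr : MatIrred (A ^ k))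
    (hdiag : ∃ i, 0 < (A ^ k) i i) :
    ∃ lam ∈ spectrum ℂ A, ‖lam‖ = specRad A ∧
      ∀ mu ∈ spectrum ℂ A, mu ≠ lam → ‖mu‖ < ‖lam‖ := by
  obtain ⟨i₀, hi₀⟩ := hdiag
  obtain ⟨m, hm, hpos⟩ :=
    exists_pow_pos_of_reachable hnonneg (hirr.exists_pow_apply_pos hnonneg) hi₀
  have hAK : A ^ (k * m) = ((A ^ (k * m)).map re).map ofReal := by
    ext i j
    exact eq_re_of_ofReal_le (r := 0) (by simpa [pow_mul] using (hpos i j).le)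
  have hR : ∀ i j, 0 < ((A ^ (k * m)).map re) i j := fun i j => by
    simpa [pow_mul] using (pos_iff.1 (hpos i j)).1
  obtain ⟨lam, hlam, hlamρ⟩ := exists_norm_eq_specRad hn A
  refine ⟨lam, hlam, hlamρ, fun mu hmu hne => ?_⟩
  refine ((norm_le_specRad hmu).trans_eq hlamρ.symm).lt_of_ne fun h => hne ?_
  exact (eq_of_norm_eq_specRad hn hR (Nat.mul_pos hk hm) hAK hlam hmu hlamρ
    (h.trans hlamρ)).symm
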